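/- For any positive definite matrices R and S of the same size and any continuous function f on [0,∞), it holds that R^{1/2}(R^{1/2} S R^{1/2})^{-1/2} R^{1/2} = S^{-1/2}(S^{1/2} R S^{1/2})^{1/2} S^{-1/2}. -/

import Mathlib

open Matrix
open scoped ComplexOrder Classical

variable {n : Type*} [Fintype n] [DecidableEq n]

/-- The positive semidefinite square root of a matrix (junk value `0` if not PSD). -/
noncomputable def msqrt (A : Matrix n n ℂ) : Matrix n n ℂ :=
  if h : A.PosSemidef then h.1.eigenvectorUnitary.1 * diagonal ((↑) ∘ (√·) ∘ h.1.eigenvalues) *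
    (star h.1.eigenvectorUnitary : Matrix n n ℂ) else 0

/-- The trace norm `‖M‖₁ = Tr √(Mᴴ M)`. -/
noncomputable def traceNorm (M : Matrix n n ℂ) : ℝ :=
  ((msqrt (Mᴴ * M)).trace).re

/-- The fidelity `F(R,S) = (Tr √(√R S √R))²` of positive semidefinite matrices. -/
noncomputable def fidelity (R S : Matrix n n ℂ) : ℝ :=
  (((msqrt (msqrt R * S * msqrt R)).trace).re) ^ 2

/-- The squared Bures distance `B(R,S)² = Tr R + Tr S - 2 √F(R,S)`. -/
noncomputable def bures2 (R S : Matrix n n ℂ) : ℝ :=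
  (R.trace).re + (S.trace).re - 2 * Real.sqrt (fidelity R S)

/-- The twirling map `𝓔(X) = (1/|G|) ∑ g, U g * X * (U g)ᴴ`. -/
noncomputable def twirl {G : Type*} [Fintype G] (U : G → Matrix n n ℂ)
    (X : Matrix n n ℂ) : Matrix n n ℂ :=
  (Fintype.card G : ℂ)⁻¹ • ∑ g, U g * X * (U g)ᴴ

/-- The maximum eigenvalue of a Hermitian matrix. -/
noncomputable def lamMax {A : Matrix n n ℂ} (hA : A.IsHermitian) : ℝ :=
  ⨆ i, hA.eigenvalues i

/-- The minimum eigenvalue of a Hermitian matrix. -/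
noncomputable def lamMin {A : Matrix n n ℂ} (hA : A.IsHermitian) : ℝ :=
  ⨅ i, hA.eigenvalues i

/-- The fixed point iteration map `K(S) = S^{-1/2} (𝓔((S^{1/2} R S^{1/2})^{1/2}))² S^{-1/2}`. -/
noncomputable def iterMap {G : Type*} [Fintype G] (U : G → Matrix n n ℂ)
    (R S : Matrix n n ℂ) : Matrix n n ℂ :=
  (msqrt S)⁻¹ * (twirl U (msqrt (msqrt S * R * msqrt S))) ^ 2 * (msqrt S)⁻¹

/-!
Both sides are the positive solution `X` of the Riccati equation `X S X = R`. For the left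
side `X = a c⁻¹ a` with `a = R^{1/2}`, `c = (a S a)^{1/2}` this is a direct computation:
`X S X = a c⁻¹ (a S a) c⁻¹ a = a a = R`. Conversely, for any positive solution and
`b = S^{1/2}`, the matrix `b X b` is positive with `(b X b)² = b (X S X) b = b R b`, so
uniqueness of positive square roots gives `b X b = (b R b)^{1/2}`, i.e. `X` is the right side.
-/

section msqrt

open scoped MatrixOrder

theorem msqrt_eq_cfcSqrt {A : Matrix n n ℂ} (hA : A.PosSemidef) : msqrt A = CFC.sqrt A := by
  rw [CFC.sqrt_eq_real_sqrt A hA.nonneg, cfcₙ_eq_cfc, hA.1.cfc_eq, IsHermitian.cfc,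
    Unitary.conjStarAlgAut_apply, msqrt, dif_pos hA]
  rfl

theorem posSemidef_msqrt {A : Matrix n n ℂ} (hA : A.PosSemidef) : (msqrt A).PosSemidef := by
  rw [msqrt_eq_cfcSqrt hA]
  exact nonneg_iff_posSemidef.mp (CFC.sqrt_nonneg A)

theorem posDef_msqrt {A : Matrix n n ℂ} (hA : A.PosDef) : (msqrt A).PosDef := by
  rw [msqrt_eq_cfcSqrt hA.posSemidef]
  exact (IsStrictlyPositive.sqrt A hA.isStrictlyPositive).posDef

theorem msqrt_mul_msqrt {A : Matrix n n ℂ} (hA : A.PosSemidef) : msqrt A * msqrt A = A := by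
  rw [msqrt_eq_cfcSqrt hA]
  exact CFC.sqrt_mul_sqrt_self A hA.nonneg

theorem eq_msqrt_of_mul_self_eq {T A : Matrix n n ℂ} (hT : T.PosSemidef) (h : T * T = A) :
    T = msqrt A := by
  have hA : A.PosSemidef := by
    simpa only [← h, hT.1.eq] using posSemidef_conjTranspose_mul_self T
  rw [msqrt_eq_cfcSqrt hA]
  exact (CFC.sqrt_unique h hT.nonneg).symm

end msqrt

theorem posSemidef_msqrt_mul_inv_msqrt_mul_msqrt {R S : Matrix n n ℂ} (hR : R.PosSemidef)
    (hS : S.PosSemidef) :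
    (msqrt R * (msqrt (msqrt R * S * msqrt R))⁻¹ * msqrt R).PosSemidef := by
  have ha := posSemidef_msqrt hR
  have hc := posSemidef_msqrt <| by
    simpa only [ha.1.eq] using hS.conjTranspose_mul_mul_same (msqrt R)
  simpa only [ha.1.eq] using hc.inv.conjTranspose_mul_mul_same (msqrt R)

theorem msqrt_mul_inv_msqrt_mul_msqrt_riccati {R S : Matrix n n ℂ} (hR : R.PosDef)
    (hS : S.PosDef) :
    msqrt R * (msqrt (msqrt R * S * msqrt R))⁻¹ * msqrt R * S *
      (msqrt R * (msqrt (msqrt R * S * msqrt R))⁻¹ * msqrt R) = R := by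
  have ha := posDef_msqrt hR
  set a := msqrt R
  set c := msqrt (a * S * a)
  have haSa : (a * S * a).PosDef := by
    simpa only [star_eq_conjTranspose, ha.1.eq] using
      ha.isUnit.posDef_star_left_conjugate_iff.mpr hS
  have hc : IsUnit c.det := (isUnit_iff_isUnit_det c).mp (posDef_msqrt haSa).isUnit
  have haa : a * a = R := msqrt_mul_msqrt hR.posSemidef
  have hcc : c * c = a * S * a := msqrt_mul_msqrt haSa.posSemidef
  calc a * c⁻¹ * a * S * (a * c⁻¹ * a)
      = a * (c⁻¹ * (c * c) * c⁻¹) * a := by rw [hcc]; noncomm_ring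
    _ = a * ((c⁻¹ * c) * (c * c⁻¹)) * a := by noncomm_ring
    _ = R := by rw [nonsing_inv_mul c hc, mul_nonsing_inv c hc, mul_one, mul_one, haa]

theorem eq_inv_msqrt_mul_msqrt_mul_inv_msqrt_of_riccati {R S X : Matrix n n ℂ}
    (hS : S.PosDef) (hX : X.PosSemidef) (hXSX : X * S * X = R) :
    X = (msqrt S)⁻¹ * msqrt (msqrt S * R * msqrt S) * (msqrt S)⁻¹ := by
  have hb := posDef_msqrt hS
  set b := msqrt S
  have hbXb : b * X * b = msqrt (b * R * b) := by
    refine eq_msqrt_of_mul_self_eq ?_ ?_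
    · simpa only [hb.1.eq] using hX.conjTranspose_mul_mul_same b
    · rw [← hXSX, ← msqrt_mul_msqrt hS.posSemidef]
      noncomm_ring
  have hb' : IsUnit b.det := (isUnit_iff_isUnit_det b).mp hb.isUnit
  rw [← hbXb]
  simp only [mul_assoc, nonsing_inv_mul_cancel_left _ _ hb', mul_nonsing_inv _ hb', mul_one]

/-- for positive definite `R`, `S`,
`R^{1/2} (R^{1/2} S R^{1/2})^{-1/2} R^{1/2} = S^{-1/2} (S^{1/2} R S^{1/2})^{1/2} S^{-1/2}`. -/
theorem sqrt_sandwich_identity (R S : Matrix n n ℂ)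
    (hR : R.PosDef) (hS : S.PosDef) :
    msqrt R * (msqrt (msqrt R * S * msqrt R))⁻¹ * msqrt R =
      (msqrt S)⁻¹ * msqrt (msqrt S * R * msqrt S) * (msqrt S)⁻¹ :=
  eq_inv_msqrt_mul_msqrt_mul_inv_msqrt_of_riccati hS
    (posSemidef_msqrt_mul_inv_msqrt_mul_msqrt hR.posSemidef hS.posSemidef)
    (msqrt_mul_inv_msqrt_mul_msqrt_riccati hR hS)
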